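/- arXiv:2003.01557 — 4 statements merged into one kernel-verified Lean document; each statement's English description precedes it below -/
import Mathlib

section
/- Let a be a nonzero complex number and define f : ℂ → ℂ by f(z) = e^{-z} + a. Then for every z ∈ ℂ, f(z) ∈ {a/3, 2a/3} if and only if f'(z) ∈ {a/3, 2a/3}, and moreover the multiplicity of every such point is 1 for both f - a/3, f - 2a/3, f' - a/3, f' - 2a/3; yet f ≠ f'. -/
/-! Here `f' = -e^{-z}`, so `f + f' = a = a/3 + 2a/3`. The reflection `x ↦ a/3 + 2a/3 - x` swaps the
two shared values, hence `f(z) ∈ S ↔ f'(z) ∈ S`. Multiplicities are one because `f'` and `f''` are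
`∓e^{-z}`, which never vanish, and `f ≠ f'` since `e^{-z}` is not constant. -/

open Complex

theorem Set.mem_pair_iff_add_sub_mem {G : Type*} [AddCommGroup G] (p q x : G) :
    x ∈ ({p, q} : Set G) ↔ p + q - x ∈ ({p, q} : Set G) := by
  have reflect (y : G) (hy : y ∈ ({p, q} : Set G)) : p + q - y ∈ ({p, q} : Set G) := by
    rcases hy with rfl | rfl <;> simp
  exact ⟨reflect x, fun h => by simpa using reflect _ h⟩

theorem hasDerivAt_exp_neg (z : ℂ) : HasDerivAt (fun w => exp (-w)) (-exp (-z)) z := by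
  simpa using (hasDerivAt_neg z).cexp

theorem deriv_exp_neg_add_const (a : ℂ) :
    deriv (fun z => exp (-z) + a) = fun z => -exp (-z) :=
  funext fun z => ((hasDerivAt_exp_neg z).add_const a).deriv

theorem deriv_neg_exp_neg : deriv (fun z : ℂ => -exp (-z)) = fun z => exp (-z) :=
  funext fun z => by simpa using (hasDerivAt_exp_neg z).neg.deriv

theorem exp_neg_add_const_ne_neg_exp_neg (a : ℂ) :
    (fun z => exp (-z) + a) ≠ fun z => -exp (-z) := by
  intro h
  have h₀ := congrFun h 0
  have h₁ := congrFun h (-log 2)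
  simp only [neg_neg, neg_zero, exp_zero, exp_log (two_ne_zero' ℂ)] at h₀ h₁
  have : (2 : ℂ) = 0 := by linear_combination h₁ - h₀
  exact two_ne_zero this

theorem stmt3_general (a : ℂ) (f : ℂ → ℂ)
    (hf : ∀ z, f z = Complex.exp (-z) + a) :
    (∀ z, f z ∈ ({a / 3, 2 * a / 3} : Set ℂ) ↔ deriv f z ∈ ({a / 3, 2 * a / 3} : Set ℂ)) ∧
      (∀ z, f z ∈ ({a / 3, 2 * a / 3} : Set ℂ) → deriv f z ≠ 0) ∧
      (∀ z, deriv f z ∈ ({a / 3, 2 * a / 3} : Set ℂ) → deriv (deriv f) z ≠ 0) ∧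
      f ≠ deriv f := by
  obtain rfl : f = fun z => exp (-z) + a := funext hf
  rw [deriv_exp_neg_add_const, deriv_neg_exp_neg]
  refine ⟨fun z => ?_, fun z _ => neg_ne_zero.mpr (exp_ne_zero _), fun z _ => exp_ne_zero _,
    exp_neg_add_const_ne_neg_exp_neg a⟩
  rw [Set.mem_pair_iff_add_sub_mem, show a / 3 + 2 * a / 3 - (exp (-z) + a) = -exp (-z) by ring]

theorem stmt3 (a : ℂ) (ha : a ≠ 0) (f : ℂ → ℂ)
    (hf : ∀ z, f z = Complex.exp (-z) + a) :
    (∀ z, f z ∈ ({a / 3, 2 * a / 3} : Set ℂ) ↔ deriv f z ∈ ({a / 3, 2 * a / 3} : Set ℂ)) ∧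
      (∀ z, f z ∈ ({a / 3, 2 * a / 3} : Set ℂ) → deriv f z ≠ 0) ∧
      (∀ z, deriv f z ∈ ({a / 3, 2 * a / 3} : Set ℂ) → deriv (deriv f) z ≠ 0) ∧
      f ≠ deriv f :=
  stmt3_general a f hf
end

section
/- Let a, b, c be distinct complex numbers with L1 = -(a+b+c), L2 = ab+bc+ca, L3 = -abc, and let Q be a complex constant. If -L1 = 3Q + L1, -L2 = 3Q² + 2L1 Q + L2, and L3 = -(Q³ + L1 Q² + L2 Q + L3), then Q = -(2/3)L1 and 2L1³ - 9L1 L2 + 27 L3 = 0, equivalently (2a-b-c)(2b-c-a)(2c-a-b) = 0. -/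
theorem stmt11 (a b c : ℂ) (hab : a ≠ b) (hbc : b ≠ c) (hca : c ≠ a)
    (L1 L2 L3 : ℂ) (hL1 : L1 = -(a + b + c)) (hL2 : L2 = a * b + b * c + c * a)
    (hL3 : L3 = -(a * b * c)) (Q : ℂ)
    (h1 : -L1 = 3 * Q + L1)
    (h2 : -L2 = 3 * Q ^ 2 + 2 * L1 * Q + L2)
    (h3 : L3 = -(Q ^ 3 + L1 * Q ^ 2 + L2 * Q + L3)) :
    Q = -(2 / 3) * L1 ∧ 2 * L1 ^ 3 - 9 * L1 * L2 + 27 * L3 = 0 ∧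
      (2 * a - b - c) * (2 * b - c - a) * (2 * c - a - b) = 0 := by
  have hQ : Q = -(2 / 3) * L1 := by linear_combination -h1 / 3
  subst hQ
  have hmain : 2 * L1 ^ 3 - 9 * L1 * L2 + 27 * L3 = 0 := by
    linear_combination (27 / 2) * h3
  refine ⟨rfl, hmain, ?_⟩
  subst hL1 hL2 hL3
  linear_combination -hmain
end

section
/- Let k ≥ 1, and let P(X) = 3X² - 2(a+b+c)X + (ab+bc+ca) for distinct complex numbers a, b, c. Suppose f is entire, z₀ ∈ ℂ, f^{(k)}(z₀) = 0, f - f(z₀) has a zero of exact order n at z₀ with n > k ≥ 2, P(f^{(k)}(z₀)) ≠ 0, and P(f(z₀)) ≠ 0. Then the function P(f^{(k)})·f^{(k+1)} has a zero of exact order n-k-1 at z₀, while the function P(f)·f' has a zero of order at least n-1 at z₀; in particular these two orders differ, so P(f^{(k)})·f^{(k+1)} ≠ A·P(f)·f' for any nonzero constant A in any neighborhood of z₀ when n-k-1 < n-1. -/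
/-!
Differentiating the shared-set identity gives `P(f⁽ᵏ⁾) f⁽ᵏ⁺¹⁾ = A P(f) f'`. At `z₀` the factor
`f⁽ᵏ⁺¹⁾` vanishes to order exactly `n - k - 1` while `P(f⁽ᵏ⁾)` does not vanish, so the left side
vanishes to order exactly `n - k - 1`; the factor `f'` vanishes to order at least `n - 1`, and so
does the right side. Since `k ≥ 1` these orders are incompatible. Orders of vanishing are read off
from Taylor coefficients via the Leibniz rule.
-/

section Leibniz

variable {𝕜 : Type*} [NontriviallyNormedField 𝕜] {𝔸 : Type*} [NormedRing 𝔸] [NormedAlgebra 𝕜 𝔸]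
  {u v : 𝕜 → 𝔸} {x : 𝕜} {m : ℕ}

theorem iteratedDeriv_fun_mul_of_forall_lt_eq_zero (hu : ContDiffAt 𝕜 m u x)
    (hv : ContDiffAt 𝕜 m v x) (hv₀ : ∀ i < m, iteratedDeriv i v x = 0) :
    iteratedDeriv m (fun z => u z * v z) x = u x * iteratedDeriv m v x := by
  rw [iteratedDeriv_fun_mul hu hv, Finset.sum_eq_single_of_mem 0 (by simp)]
  · simp
  · intro j hj hj0
    rw [Finset.mem_range] at hj
    rw [hv₀ (m - j) (by omega), mul_zero]

theorem iteratedDeriv_fun_mul_eq_zero_of_forall_lt_eq_zero (hu : ContDiffAt 𝕜 m u x)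
    (hv : ContDiffAt 𝕜 m v x) (hv₀ : ∀ i < m, iteratedDeriv i v x = 0) {i : ℕ} (hi : i < m) :
    iteratedDeriv i (fun z => u z * v z) x = 0 := by
  have hle : (i : WithTop ℕ∞) ≤ m := by exact_mod_cast hi.le
  rw [iteratedDeriv_fun_mul_of_forall_lt_eq_zero (hu.of_le hle) (hv.of_le hle)
    (fun j hj => hv₀ j (hj.trans hi)), hv₀ i hi, mul_zero]

end Leibniz

theorem iteratedDeriv_iteratedDeriv {𝕜 : Type*} [NontriviallyNormedField 𝕜] {F : Type*}
    [NormedAddCommGroup F] [NormedSpace 𝕜 F] (i j : ℕ) (f : 𝕜 → F) :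
    iteratedDeriv i (iteratedDeriv j f) = iteratedDeriv (i + j) f := by
  simp only [iteratedDeriv_eq_iterate, Function.iterate_add_apply]

theorem stmt14_general (a b c : ℂ)
    (P : ℂ → ℂ)
    (hP : ∀ x, P x = 3 * x ^ 2 - 2 * (a + b + c) * x + (a * b + b * c + c * a))
    (f : ℂ → ℂ) (hf : Differentiable ℂ f) (z₀ : ℂ) (n k : ℕ)
    (hk : 2 ≤ k) (hkn : k < n)
    (hzero : ∀ i, 1 ≤ i → i < n → iteratedDeriv i f z₀ = 0)
    (hne : iteratedDeriv n f z₀ ≠ 0)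
    (hPfk : P (iteratedDeriv k f z₀) ≠ 0) :
    ((∀ i, i < n - k - 1 →
        iteratedDeriv i (fun z => P (iteratedDeriv k f z) * iteratedDeriv (k + 1) f z) z₀ = 0) ∧
      iteratedDeriv (n - k - 1)
        (fun z => P (iteratedDeriv k f z) * iteratedDeriv (k + 1) f z) z₀ ≠ 0) ∧
    (∀ i, i < n - 1 → iteratedDeriv i (fun z => P (f z) * deriv f z) z₀ = 0) ∧
    (∀ A : ℂ, A ≠ 0 →
      ¬ (∀ᶠ z in nhds z₀,
        P (iteratedDeriv k f z) * iteratedDeriv (k + 1) f z = A * (P (f z) * deriv f z))) := by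
  have hPdiff : Differentiable ℂ P := by rw [funext hP]; fun_prop
  have hdiff (j : ℕ) : Differentiable ℂ (iteratedDeriv j f) :=
    hf.contDiff.differentiable_iteratedDeriv j (WithTop.coe_lt_top _)
  have hD (j : ℕ) {m : ℕ} : ContDiffAt ℂ m (iteratedDeriv j f) z₀ :=
    (hdiff j).contDiff.contDiffAt
  have hPD (j : ℕ) {m : ℕ} : ContDiffAt ℂ m (fun z => P (iteratedDeriv j f z)) z₀ :=
    (hPdiff.comp (hdiff j)).contDiff.contDiffAt
  have hvanish (j : ℕ) (hj : 1 ≤ j) (i : ℕ) (hi : i < n - j) :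
      iteratedDeriv i (iteratedDeriv j f) z₀ = 0 := by
    rw [iteratedDeriv_iteratedDeriv]; exact hzero _ (by omega) (by omega)
  have hvanish_succ : ∀ i < n - k - 1, iteratedDeriv i (iteratedDeriv (k + 1) f) z₀ = 0 :=
    fun i hi => hvanish (k + 1) (by omega) i (by omega)
  have hleading : iteratedDeriv (n - k - 1)
      (fun z => P (iteratedDeriv k f z) * iteratedDeriv (k + 1) f z) z₀ ≠ 0 := by
    rw [iteratedDeriv_fun_mul_of_forall_lt_eq_zero (hPD k) (hD _) hvanish_succ,
      iteratedDeriv_iteratedDeriv, show n - k - 1 + (k + 1) = n by omega]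
    exact mul_ne_zero hPfk hne
  have hright : ∀ i, i < n - 1 → iteratedDeriv i (fun z => P (f z) * deriv f z) z₀ = 0 := by
    intro i hi
    simpa only [iteratedDeriv_one, iteratedDeriv_zero] using
      iteratedDeriv_fun_mul_eq_zero_of_forall_lt_eq_zero (hPD 0) (hD 1) (hvanish 1 le_rfl) hi
  refine ⟨⟨fun i hi => ?_, hleading⟩, hright, fun A _ hev => hleading ?_⟩
  · exact iteratedDeriv_fun_mul_eq_zero_of_forall_lt_eq_zero (hPD k) (hD _) hvanish_succ hi
  · rw [Filter.EventuallyEq.iteratedDeriv_eq _ hev, iteratedDeriv_const_mul_field,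
      hright _ (by omega), mul_zero]

theorem stmt14 (a b c : ℂ) (hab : a ≠ b) (hbc : b ≠ c) (hca : c ≠ a)
    (P : ℂ → ℂ)
    (hP : ∀ x, P x = 3 * x ^ 2 - 2 * (a + b + c) * x + (a * b + b * c + c * a))
    (f : ℂ → ℂ) (hf : Differentiable ℂ f) (z₀ : ℂ) (n k : ℕ)
    (hk : 2 ≤ k) (hkn : k < n)
    (hfk0 : iteratedDeriv k f z₀ = 0)
    (hzero : ∀ i, 1 ≤ i → i < n → iteratedDeriv i f z₀ = 0)
    (hne : iteratedDeriv n f z₀ ≠ 0)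
    (hPfk : P (iteratedDeriv k f z₀) ≠ 0) (hPf : P (f z₀) ≠ 0) :
    ((∀ i, i < n - k - 1 →
        iteratedDeriv i (fun z => P (iteratedDeriv k f z) * iteratedDeriv (k + 1) f z) z₀ = 0) ∧
      iteratedDeriv (n - k - 1)
        (fun z => P (iteratedDeriv k f z) * iteratedDeriv (k + 1) f z) z₀ ≠ 0) ∧
    (∀ i, i < n - 1 → iteratedDeriv i (fun z => P (f z) * deriv f z) z₀ = 0) ∧
    (∀ A : ℂ, A ≠ 0 →
      ¬ (∀ᶠ z in nhds z₀,
        P (iteratedDeriv k f z) * iteratedDeriv (k + 1) f z = A * (P (f z) * deriv f z))) :=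
  stmt14_general a b c P hP f hf z₀ n k hk hkn hzero hne hPfk
end

section
/- Let k ≥ 1 and let α, θ be complex numbers with α ≠ 0 and θ = exp(2πi/k). Let g(z) = Σ_{j=0}^{k-1} c_j e^{α θ^j z} with c_{k-1} ≠ 0. Then the functions 1, g, g², g³ are linearly independent over the ring of polynomials ℂ[z]: if p₀(z) + p₁(z)g(z) + p₂(z)g(z)² + p₃(z)g(z)³ = 0 identically for polynomials p₀, p₁, p₂, p₃, then p₀ = p₁ = p₂ = p₃ = 0. -/
/-!
An exponential polynomial `∑ p_μ(z) e^{μz}` is an element of the group ring `ℂ[X][ℂ]`, and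
evaluation on it is injective: this is the linear independence of the `z^r e^{μz}`, proved by
multiplying a relation by `e^{-μ₀z}` and differentiating until the `μ₀` term disappears. So it
suffices that `G = ∑ c_j e^{αθ^j}` is transcendental over `ℂ[X]` in `ℂ[X][ℂ]`. Let `b` be an
exponent of maximal modulus in the support of `G`; it is nonzero, and the additive functional
`μ ↦ Re(μ b̄)` is positive at `b` and strictly smaller at every other exponent of `G`. For a
nonzero `Q ∈ ℂ[X][Y]` of degree `n` the exponent `n b` then occurs in `Q(G)` only through
`lc(Q) G^n`, with coefficient `lc(Q) G_b^n ≠ 0`.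
-/

open Polynomial Complex ComplexConjugate

noncomputable def expDerivative (μ : ℂ) : Module.End ℂ ℂ[X] := derivative + μ • 1

theorem expDerivative_apply (μ : ℂ) (p : ℂ[X]) :
    expDerivative μ p = derivative p + C μ * p := by
  simp [expDerivative, smul_eq_C_mul]

theorem hasDerivAt_eval_mul_exp (p : ℂ[X]) (μ z : ℂ) :
    HasDerivAt (fun w => p.eval w * exp (μ * w))
      ((expDerivative μ p).eval z * exp (μ * z)) z := by
  have hexp : HasDerivAt (fun w => exp (μ * w)) (exp (μ * z) * μ) z := by
    simpa using ((hasDerivAt_id z).const_mul μ).cexp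
  refine ((p.hasDerivAt z).fun_mul hexp).congr_deriv ?_
  rw [expDerivative_apply, eval_add, eval_mul, eval_C]
  ring

theorem expDerivative_zero : expDerivative 0 = derivative := by
  simp [expDerivative]

theorem expDerivative_injective {μ : ℂ} (hμ : μ ≠ 0) : Function.Injective (expDerivative μ) := by
  refine (injective_iff_map_eq_zero (expDerivative μ)).2 fun p hp => ?_
  have htop := congrArg (coeff · p.natDegree) hp
  simp only [expDerivative_apply, coeff_add, coeff_derivative, coeff_C_mul, coeff_zero,
    coeff_eq_zero_of_natDegree_lt p.natDegree.lt_succ_self, zero_mul, zero_add] at htop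
  simpa [hμ] using htop

theorem sum_eval_mul_exp_expDerivative_eq_zero {ι : Type*} {s : Finset ι} {e : ι → ℂ}
    {q : ι → ℂ[X]}
    (h : ∀ z, ∑ i ∈ s, (q i).eval z * exp (e i * z) = 0) (z : ℂ) :
    ∑ i ∈ s, (expDerivative (e i) (q i)).eval z * exp (e i * z) = 0 := by
  have hderiv := HasDerivAt.fun_sum fun i (_ : i ∈ s) => hasDerivAt_eval_mul_exp (q i) (e i) z
  rw [funext h] at hderiv
  exact hderiv.unique (hasDerivAt_const z 0)

theorem sum_eval_mul_exp_expDerivative_pow_eq_zero {ι : Type*} {s : Finset ι} {e : ι → ℂ}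
    {q : ι → ℂ[X]} (h : ∀ z, ∑ i ∈ s, (q i).eval z * exp (e i * z) = 0) (n : ℕ) (z : ℂ) :
    ∑ i ∈ s, ((expDerivative (e i) ^ n) (q i)).eval z * exp (e i * z) = 0 := by
  induction n generalizing z with
  | zero => simpa using h z
  | succ n ih => simpa only [pow_succ', Module.End.mul_apply] using
      sum_eval_mul_exp_expDerivative_eq_zero ih z

theorem sum_eval_mul_exp_sub_eq_zero {ι : Type*} {s : Finset ι} {e : ι → ℂ}
    {q : ι → ℂ[X]}
    (h : ∀ z, ∑ i ∈ s, (q i).eval z * exp (e i * z) = 0) (c z : ℂ) :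
    ∑ i ∈ s, (q i).eval z * exp ((e i - c) * z) = 0 := by
  have := congrArg (· * exp (-c * z)) (h z)
  simp only [Finset.sum_mul, zero_mul, mul_assoc, ← exp_add] at this
  simpa only [sub_eq_add_neg, add_mul, neg_mul] using this

theorem eq_zero_of_sum_eval_mul_exp_eq_zero {ι : Type*} [DecidableEq ι] (s : Finset ι)
    {e : ι → ℂ} (he : Set.InjOn e s) {q : ι → ℂ[X]}
    (h : ∀ z, ∑ i ∈ s, (q i).eval z * exp (e i * z) = 0) : ∀ i ∈ s, q i = 0 := by
  induction s using Finset.induction_on generalizing e q with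
  | empty => simp
  | insert i₀ s hi₀ ih =>
    have he' : Set.InjOn e s := he.mono (by simp)
    have hne : ∀ i ∈ s, e i - e i₀ ≠ 0 := fun i hi h0 =>
      hi₀ (he (by simp [hi]) (by simp) (sub_eq_zero.mp h0) ▸ hi)
    -- differentiating `natDegree + 1` times kills the `e i₀` term, shifted to exponent `0`
    set N := (q i₀).natDegree + 1
    have hkill : derivative^[N] (q i₀) = 0 := iterate_derivative_eq_zero (Nat.lt_succ_self _)
    have hdiff :=
      sum_eval_mul_exp_expDerivative_pow_eq_zero (sum_eval_mul_exp_sub_eq_zero h (e i₀)) N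
    simp only [Finset.sum_insert hi₀, sub_self, expDerivative_zero, Module.End.pow_apply,
      hkill, eval_zero, zero_mul, zero_add] at hdiff
    have hs : ∀ i ∈ s, q i = 0 := fun i hi =>
      ((expDerivative_injective (hne i hi)).iterate N).eq_iff' (by simp) |>.mp <|
        ih (fun a ha b hb hab => he' ha hb (sub_left_injective hab))
          (q := fun i => (expDerivative (e i - e i₀))^[N] (q i)) hdiff i hi
    have hi₀ : q i₀ = 0 := Polynomial.funext fun z => by
      have hz := h z
      rw [Finset.sum_insert hi₀,
        Finset.sum_eq_zero fun i hi => by rw [hs i hi, eval_zero, zero_mul], add_zero] at hz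
      simpa using hz
    simpa [hi₀] using hs

noncomputable def expPolyEval (z : ℂ) : AddMonoidAlgebra ℂ[X] ℂ →+* ℂ :=
  AddMonoidAlgebra.liftNCRingHom (evalRingHom z)
    (expMonoidHom.comp (AddMonoidHom.mulRight z).toMultiplicative) fun _ _ => Commute.all _ _

@[simp]
theorem expPolyEval_single (z μ : ℂ) (p : ℂ[X]) :
    expPolyEval z (AddMonoidAlgebra.single μ p) = p.eval z * exp (μ * z) := by
  simp [expPolyEval]

theorem expPolyEval_apply (z : ℂ) (f : AddMonoidAlgebra ℂ[X] ℂ) :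
    expPolyEval z f = ∑ μ ∈ f.coeff.support, (f.coeff μ).eval z * exp (μ * z) := by
  conv_lhs => rw [← f.sum_coeff_single]
  simp [Finsupp.sum, map_sum]

theorem eq_zero_of_forall_expPolyEval_eq_zero {f : AddMonoidAlgebra ℂ[X] ℂ}
    (h : ∀ z, expPolyEval z f = 0) : f = 0 := by
  classical
  have hcoeff := eq_zero_of_sum_eval_mul_exp_eq_zero f.coeff.support (e := id) (Set.injOn_id _)
    (q := f.coeff) (by simpa [expPolyEval_apply] using h)
  ext μ : 2
  by_contra hμ
  exact hμ (hcoeff μ (Finsupp.mem_support_iff.2 hμ))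

namespace AddMonoidAlgebra

section

variable {R A : Type*} [Semiring R] [AddCancelCommMonoid A] {φ : A →+ ℝ}
  {f : AddMonoidAlgebra R A} {a : A}

theorem map_le_of_mem_support_coeff_pow (hle : ∀ b ∈ f.coeff.support, φ b ≤ φ a) (n : ℕ) :
    ∀ b ∈ (f ^ n).coeff.support, φ b ≤ n * φ a := by
  classical
  induction n with
  | zero =>
    intro b hb
    simpa using (congrArg φ (Finset.mem_singleton.mp (support_coeff_one_subset hb))).le
  | succ n ih =>
    intro b hb
    obtain ⟨b₁, hb₁, b₂, hb₂, rfl⟩ :=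
      Finset.mem_add.mp (support_coeff_mul_subset _ _ (pow_succ f n ▸ hb))
    rw [map_add]
    push_cast
    linarith [ih b₁ hb₁, hle b₂ hb₂]

theorem coeff_pow_nsmul (hmax : ∀ b ∈ f.coeff.support, b ≠ a → φ b < φ a) (n : ℕ) :
    (f ^ n).coeff (n • a) = f.coeff a ^ n := by
  have hle : ∀ b ∈ f.coeff.support, φ b ≤ φ a := fun b hb =>
    (eq_or_ne b a).elim (fun h => h ▸ le_rfl) fun h => (hmax b hb h).le
  induction n with
  | zero => simp
  | succ n ih =>
    rw [pow_succ, succ_nsmul, coeff_mul_add_of_uniqueAdd, ih, pow_succ]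
    intro b₁ b₂ hb₁ hb₂ hsum
    have h₁ := map_le_of_mem_support_coeff_pow hle n b₁ hb₁
    have hφ := congrArg φ hsum
    simp only [map_add, map_nsmul, nsmul_eq_mul] at hφ
    have hb₂a : b₂ = a := by
      by_contra hne
      linarith [hmax b₂ hb₂ hne]
    exact ⟨add_right_cancel (hb₂a ▸ hsum), hb₂a⟩

theorem coeff_pow_nsmul_eq_zero_of_lt (hle : ∀ b ∈ f.coeff.support, φ b ≤ φ a) (hpos : 0 < φ a)
    {m n : ℕ} (hmn : m < n) : (f ^ m).coeff (n • a) = 0 := by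
  by_contra hne
  have := map_le_of_mem_support_coeff_pow hle m _ (Finsupp.mem_support_iff.2 hne)
  rw [map_nsmul, nsmul_eq_mul] at this
  exact (Nat.cast_le.mp (le_of_mul_le_mul_right this hpos)).not_gt hmn

end

theorem transcendental_of_forall_lt {R A : Type*} [CommRing R] [IsDomain R]
    [AddCancelCommMonoid A] {f : AddMonoidAlgebra R A} {a : A} (φ : A →+ ℝ)
    (ha : f.coeff a ≠ 0) (hpos : 0 < φ a)
    (hmax : ∀ b ∈ f.coeff.support, b ≠ a → φ b < φ a) : Transcendental R f := by
  have hle : ∀ b ∈ f.coeff.support, φ b ≤ φ a := fun b hb =>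
    (eq_or_ne b a).elim (fun h => h ▸ le_rfl) fun h => (hmax b hb h).le
  rintro ⟨Q, hQ, hQf⟩
  have htop := congrArg (coeff · (Q.natDegree • a)) hQf
  simp only [aeval_eq_sum_range, coeff_sum, Finsupp.finsetSum_apply, coeff_smul_apply,
    smul_eq_mul, coeff_zero, Finsupp.coe_zero, Pi.zero_apply] at htop
  rw [Finset.sum_eq_single_of_mem _ (Finset.self_mem_range_succ _) fun n hn hne => by
    rw [coeff_pow_nsmul_eq_zero_of_lt hle hpos
      ((Finset.mem_range_succ_iff.mp hn).lt_of_ne hne), mul_zero], coeff_pow_nsmul hmax] at htop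
  exact mul_ne_zero (Polynomial.leadingCoeff_ne_zero.mpr hQ) (pow_ne_zero _ ha) htop

end AddMonoidAlgebra

theorem Complex.re_mul_conj_lt_normSq {a b : ℂ} (hb : ‖b‖ ≤ ‖a‖) (hne : b ≠ a) :
    (b * conj a).re < normSq a := by
  have hsq : normSq b ≤ normSq a := by
    rw [normSq_eq_norm_sq, normSq_eq_norm_sq]; gcongr
  linarith [normSq_sub b a, normSq_pos.2 (sub_ne_zero.2 hne)]

theorem AddMonoidAlgebra.transcendental_of_mem_support {R : Type*} [CommRing R] [IsDomain R]
    {f : AddMonoidAlgebra R ℂ} {a : ℂ} (ha : a ∈ f.coeff.support) (ha0 : a ≠ 0) :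
    Transcendental R f := by
  obtain ⟨b, hb, hbmax⟩ := f.coeff.support.exists_max_image (‖·‖) ⟨a, ha⟩
  have hb0 : b ≠ 0 := by
    rintro rfl
    exact ha0 (norm_le_zero_iff.mp (by simpa using hbmax a ha))
  refine transcendental_of_forall_lt (reAddGroupHom.comp (AddMonoidHom.mulRight (conj b)))
    (Finsupp.mem_support_iff.1 hb) ?_ fun c hc hne => ?_
  · simpa [mul_conj] using normSq_pos.2 hb0
  · simpa [mul_conj] using re_mul_conj_lt_normSq (hbmax c hc) hne

theorem AddMonoidAlgebra.coeff_sum_single_of_injOn {R A ι : Type*} [Semiring R] {s : Finset ι}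
    {e : ι → A} (he : Set.InjOn e s) (r : ι → R) {i : ι} (hi : i ∈ s) :
    (∑ j ∈ s, single (e j) (r j)).coeff (e i) = r i := by
  classical
  rw [coeff_sum, Finsupp.finsetSum_apply, Finset.sum_eq_single_of_mem i hi fun j hj hji => by
    rw [coeff_single, Finsupp.single_eq_of_ne (he.ne hi hj hji.symm)], coeff_single,
    Finsupp.single_eq_same]

theorem stmt15 (k : ℕ) (hk : 1 ≤ k) (α θ : ℂ) (hα : α ≠ 0)
    (hθ : θ = Complex.exp (2 * Real.pi * Complex.I / k))
    (c : ℕ → ℂ) (hc : c (k - 1) ≠ 0) (g : ℂ → ℂ)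
    (hg : ∀ z, g z = ∑ j ∈ Finset.range k, c j * Complex.exp (α * θ ^ j * z)) :
    ∀ p₀ p₁ p₂ p₃ : Polynomial ℂ,
      (∀ z, p₀.eval z + p₁.eval z * g z + p₂.eval z * (g z) ^ 2 + p₃.eval z * (g z) ^ 3 = 0) →
      p₀ = 0 ∧ p₁ = 0 ∧ p₂ = 0 ∧ p₃ = 0 := by
  intro p₀ p₁ p₂ p₃ hrel
  have hθk : IsPrimitiveRoot θ k := hθ ▸ isPrimitiveRoot_exp k (by omega)
  have hinj : Set.InjOn (fun j => α * θ ^ j) (Finset.range k) := fun i hi j hj hij =>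
    hθk.pow_inj (Finset.mem_range.mp hi) (Finset.mem_range.mp hj) (mul_left_cancel₀ hα hij)
  set G : AddMonoidAlgebra ℂ[X] ℂ :=
    ∑ j ∈ Finset.range k, AddMonoidAlgebra.single (α * θ ^ j) (C (c j))
  have hG : ∀ z, expPolyEval z G = g z := fun z => by
    simp [G, hg, map_sum, mul_assoc]
  have hGtr : Transcendental ℂ[X] G := by
    refine AddMonoidAlgebra.transcendental_of_mem_support (a := α * θ ^ (k - 1)) ?_ ?_
    · rw [Finsupp.mem_support_iff, AddMonoidAlgebra.coeff_sum_single_of_injOn hinj _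
        (Finset.mem_range.mpr (by omega))]
      exact C_ne_zero.mpr hc
    · exact mul_ne_zero hα (pow_ne_zero _ (hθk.ne_zero (by omega)))
  set Q : ℂ[X][X] := C p₀ + C p₁ * X + C p₂ * X ^ 2 + C p₃ * X ^ 3
  have hQ : Q = 0 := transcendental_iff_injective.mp hGtr <| by
    rw [map_zero]
    exact eq_zero_of_forall_expPolyEval_eq_zero fun z => by simp [Q, hG, hrel z]
  have hcoeff (n : ℕ) := congrArg (coeff · n) hQ
  exact ⟨by simpa [Q] using hcoeff 0, by simpa [Q] using hcoeff 1, by simpa [Q] using hcoeff 2,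
    by simpa [Q] using hcoeff 3⟩
end
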